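/- Let V be a finite set of propositional variables, models being valuations V → Bool, and let Σ be a set of models. Let α, β be propositional formulas with var(α) ∩ var(β) = ∅ and var(β) ∩ R(Σ) = ∅, and suppose β is not a tautology. If every σ ∈ Σ satisfies α ∨ β, then every σ ∈ Σ satisfies α. -/

import Mathlib

/-- Propositional formulas over variables `V`. -/
inductive PropForm (V : Type*) where
  | var : V → PropForm V
  | tru : PropForm V
  | fls : PropForm V
  | neg : PropForm V → PropForm V
  | conj : PropForm V → PropForm V → PropForm V
  | disj : PropForm V → PropForm V → PropForm V

namespace PropForm

/-- Evaluation of a formula under a valuation. -/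
def eval {V : Type*} (σ : V → Bool) : PropForm V → Bool
  | var v => σ v
  | tru => true
  | fls => false
  | neg φ => !eval σ φ
  | conj φ ψ => eval σ φ && eval σ ψ
  | disj φ ψ => eval σ φ || eval σ ψ

/-- The set of variables occurring in a formula. -/
def vars {V : Type*} : PropForm V → Set V
  | var v => {v}
  | tru => ∅
  | fls => ∅
  | neg φ => vars φ
  | conj φ ψ => vars φ ∪ vars ψ
  | disj φ ψ => vars φ ∪ vars ψ

end PropForm

/-- A variable `v` is irrelevant for `S` iff `S` is closed under changing the value at `v`. -/
def Irrelevant {V : Type*} [DecidableEq V] (S : Set (V → Bool)) (v : V) : Prop :=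
  ∀ σ ∈ S, ∀ x : Bool, Function.update σ v x ∈ S

/-- The relevant variables of `S`. -/
def RelIdx {V : Type*} [DecidableEq V] (S : Set (V → Bool)) : Set V :=
  {v | ¬ Irrelevant S v}

/-!
Overwrite `σ ∈ S` on the variables of `β` by a falsifying valuation `τ` of `β`. Since these
variables are irrelevant for `S`, the result stays in `S`; it still falsifies `β`, and since `α`
shares no variable with `β` it evaluates `α` as `σ` does. So `α ∨ β` at the new model forces `α`
at `σ`.
-/

namespace PropForm

variable {V : Type*}

theorem vars_finite (φ : PropForm V) : φ.vars.Finite := by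
  induction φ with
  | var v => exact Set.finite_singleton v
  | tru | fls => exact Set.finite_empty
  | neg _ ih => exact ih
  | conj _ _ ih₁ ih₂ | disj _ _ ih₁ ih₂ => exact ih₁.union ih₂

theorem eval_congr {σ τ : V → Bool} (φ : PropForm V) (h : ∀ v ∈ φ.vars, σ v = τ v) :
    φ.eval σ = φ.eval τ := by
  induction φ with
  | var v => exact h v rfl
  | tru | fls => rfl
  | neg _ ih => simp only [eval, ih h]
  | conj _ _ ih₁ ih₂ | disj _ _ ih₁ ih₂ =>
    simp only [eval, ih₁ fun v hv => h v (Or.inl hv), ih₂ fun v hv => h v (Or.inr hv)]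

theorem eval_piecewise_of_subset [DecidableEq V] (φ : PropForm V) {A : Finset V}
    (hA : φ.vars ⊆ A) (τ σ : V → Bool) : φ.eval (A.piecewise τ σ) = φ.eval τ :=
  φ.eval_congr fun _ hv => A.piecewise_eq_of_mem τ σ (hA hv)

theorem eval_piecewise_of_disjoint [DecidableEq V] (φ : PropForm V) {A : Finset V}
    (hA : Disjoint φ.vars A) (τ σ : V → Bool) : φ.eval (A.piecewise τ σ) = φ.eval σ :=
  φ.eval_congr fun _ hv => A.piecewise_eq_of_notMem τ σ (hA.notMem_of_mem_left hv)

end PropForm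

theorem Irrelevant.piecewise_mem {V : Type*} [DecidableEq V] {S : Set (V → Bool)}
    {A : Finset V} (hA : ∀ v ∈ A, Irrelevant S v) (τ : V → Bool) {σ : V → Bool}
    (hσ : σ ∈ S) : A.piecewise τ σ ∈ S := by
  induction A using Finset.induction_on with
  | empty => simpa using hσ
  | insert a A _ ih =>
    rw [Finset.piecewise_insert]
    exact hA a (A.mem_insert_self a) _
      (ih fun v hv => hA v (Finset.mem_insert_of_mem hv)) (τ a)

theorem interpolation_aux_general
    {V : Type*} [DecidableEq V]
    (S : Set (V → Bool)) (α β : PropForm V)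
    (hvars : α.vars ∩ β.vars = ∅)
    (hrel : β.vars ∩ RelIdx S = ∅)
    (htaut : ¬ ∀ σ : V → Bool, β.eval σ = true)
    (h : ∀ σ ∈ S, (α.disj β).eval σ = true) :
    ∀ σ ∈ S, α.eval σ = true := by
  intro σ hσ
  obtain ⟨τ, hτ⟩ := not_forall.1 htaut
  set A := β.vars_finite.toFinset
  have hA_irrelevant : ∀ v ∈ A, Irrelevant S v := fun v hv => by
    by_contra hv_rel
    exact hrel.subset ⟨β.vars_finite.mem_toFinset.1 hv, hv_rel⟩
  have hβ : β.eval (A.piecewise τ σ) = false := by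
    rw [β.eval_piecewise_of_subset β.vars_finite.coe_toFinset.ge]
    simpa using hτ
  have hα : α.eval (A.piecewise τ σ) = α.eval σ := by
    refine α.eval_piecewise_of_disjoint ?_ τ σ
    rw [β.vars_finite.coe_toFinset]
    exact Set.disjoint_iff_inter_eq_empty.2 hvars
  simpa [PropForm.eval, hα, hβ] using h _ (Irrelevant.piecewise_mem hA_irrelevant τ hσ)

/-- if `var(α) ∩ var(β) = ∅`, `var(β) ∩ R(S) = ∅`, `β` is not a
tautology and every `σ ∈ S` satisfies `α ∨ β`, then every `σ ∈ S` satisfies `α`. -/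
theorem interpolation_aux
    {V : Type*} [Fintype V] [DecidableEq V]
    (S : Set (V → Bool)) (α β : PropForm V)
    (hvars : α.vars ∩ β.vars = ∅)
    (hrel : β.vars ∩ RelIdx S = ∅)
    (htaut : ¬ ∀ σ : V → Bool, β.eval σ = true)
    (h : ∀ σ ∈ S, (α.disj β).eval σ = true) :
    ∀ σ ∈ S, α.eval σ = true :=
  interpolation_aux_general S α β hvars hrel htaut h
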